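/- Let x ∈ S² have height h(x) (i.e., √(h(x))·x ∈ ℤ³ with h(x) minimal positive). If γ is a Hurwitz quaternion with γ·x ∉ {x,-x}, then the spherical distance satisfies 1/√(n(γ)h(x)) ≤ d(γ·x, x) ≤ π - 1/√(n(γ)h(x)), where d(u,v) = arccos⟨u,v⟩. -/

import Mathlib

open Quaternion

/-- `γ` is a Hurwitz quaternion: `γ = (a + bi + cj + dk)/2` with `a,b,c,d ∈ ℤ`
all of the same parity. -/
def IsHurwitz (γ : ℍ[ℝ]) : Prop :=
  ∃ a b c d : ℤ, a % 2 = b % 2 ∧ b % 2 = c % 2 ∧ c % 2 = d % 2 ∧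
    γ = ⟨(a : ℝ) / 2, (b : ℝ) / 2, (c : ℝ) / 2, (d : ℝ) / 2⟩

/-- `√h · x` has integer coordinates (for `x` a pure quaternion). -/
def IntCoords (h : ℕ) (x : ℍ[ℝ]) : Prop :=
  ∃ u v w : ℤ, Real.sqrt h * x.imI = u ∧ Real.sqrt h * x.imJ = v ∧ Real.sqrt h * x.imK = w

/-- `h` is the height of `x`: the least positive integer such that `√h·x` has
integer coordinates. -/
def HasHeight (x : ℍ[ℝ]) (h : ℕ) : Prop :=
  0 < h ∧ IntCoords h x ∧ ∀ k : ℕ, 0 < k → IntCoords k x → h ≤ k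

/-- The rotation action of a nonzero quaternion on pure quaternions:
`γ·x = γ x γ̄ / n(γ)`. -/
noncomputable def quatAct (γ x : ℍ[ℝ]) : ℍ[ℝ] :=
  (Quaternion.normSq γ)⁻¹ • (γ * x * star γ)

/-- The Euclidean inner product of two pure quaternions: `⟨p,q⟩ = -re(pq)`. -/
noncomputable def pureInner (p q : ℍ[ℝ]) : ℝ := -(p * q).re

/-- The spherical distance `d(u,v) = arccos⟨u,v⟩` between unit pure quaternions. -/
noncomputable def sphDist (p q : ℍ[ℝ]) : ℝ := Real.arccos (pureInner p q)

/-! Put `X = √h • x`, a pure quaternion with integer coordinates. Then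
`n(γ) h ⟨γ·x, x⟩ = ⟨γ X γ̄, X⟩`, and conjugation by a Hurwitz quaternion maps integer
quaternions to integer quaternions (the parity condition makes all halves cancel), so
`n(γ) h ⟨γ·x, x⟩` is an integer. Since `γ·x ≠ ±x` it lies strictly between `-n(γ) h` and
`n(γ) h`, hence `|⟨γ·x, x⟩| ≤ 1 - 1/(n(γ) h)`, and `cos s ≥ 1 - s²/2` turns this into the two
distance bounds. -/

def IsLipschitz (q : ℍ[ℝ]) : Prop :=
  ∃ e u v w : ℤ, q.re = e ∧ q.imI = u ∧ q.imJ = v ∧ q.imK = w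

theorem IsLipschitz.exists_re_mul_eq {p q : ℍ[ℝ]} (hp : IsLipschitz p) (hq : IsLipschitz q) :
    ∃ k : ℤ, (p * q).re = k := by
  obtain ⟨a, b, c, d, ha, hb, hc, hd⟩ := hp
  obtain ⟨e, u, v, w, he, hu, hv, hw⟩ := hq
  exact ⟨a * e - b * u - c * v - d * w, by simp [re_mul, *]⟩

theorem IntCoords.isLipschitz_smul {h : ℕ} {x : ℍ[ℝ]} (hx : IntCoords h x) (hre : x.re = 0) :
    IsLipschitz (Real.sqrt h • x) := by
  obtain ⟨u, v, w, hu, hv, hw⟩ := hx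
  exact ⟨0, u, v, w, by simp [hre], hu, hv, hw⟩

theorem IsHurwitz.exists_coords {γ : ℍ[ℝ]} (hγ : IsHurwitz γ) :
    ∃ a p q r : ℤ, γ.re = a / 2 ∧ γ.imI = a / 2 + p ∧ γ.imJ = a / 2 + q ∧ γ.imK = a / 2 + r := by
  obtain ⟨a, b, c, d, hab, hbc, hcd, rfl⟩ := hγ
  obtain ⟨p, hp⟩ := Int.ModEq.dvd hab
  obtain ⟨q, hq⟩ := Int.ModEq.dvd (hab.trans hbc)
  obtain ⟨r, hr⟩ := Int.ModEq.dvd ((hab.trans hbc).trans hcd)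
  refine ⟨a, p, q, r, rfl, ?_, ?_, ?_⟩
  · rw [show b = a + 2 * p by linarith]; push_cast; ring
  · rw [show c = a + 2 * q by linarith]; push_cast; ring
  · rw [show d = a + 2 * r by linarith]; push_cast; ring

theorem IsHurwitz.exists_normSq_eq {γ : ℍ[ℝ]} (hγ : IsHurwitz γ) :
    ∃ n : ℤ, normSq γ = n := by
  obtain ⟨a, p, q, r, ha, hp, hq, hr⟩ := hγ.exists_coords
  exact ⟨a ^ 2 + a * (p + q + r) + p ^ 2 + q ^ 2 + r ^ 2, by
    rw [normSq_def', ha, hp, hq, hr]; push_cast; ring⟩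

theorem IsHurwitz.isLipschitz_mul_mul_star {γ X : ℍ[ℝ]} (hγ : IsHurwitz γ) (hX : IsLipschitz X) :
    IsLipschitz (γ * X * star γ) := by
  obtain ⟨a, p, q, r, ha, hp, hq, hr⟩ := hγ.exists_coords
  obtain ⟨e, u, v, w, he, hu, hv, hw⟩ := hX
  -- the coefficients of `γ X γ̄` after substituting `b = a + 2p`, `c = a + 2q`, `d = a + 2r`
  refine ⟨(a ^ 2 + a * (p + q + r) + p ^ 2 + q ^ 2 + r ^ 2) * e,
    a ^ 2 * w + a * (p * (u + v + w) + q * (-u + v + w) + r * (-u - v + w))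
      + (p ^ 2 - q ^ 2 - r ^ 2) * u + 2 * p * (q * v + r * w),
    a ^ 2 * u + a * (p * (u - v - w) + q * (u + v + w) + r * (u - v + w))
      + (q ^ 2 - p ^ 2 - r ^ 2) * v + 2 * q * (p * u + r * w),
    a ^ 2 * v + a * (p * (u + v - w) + q * (-u + v - w) + r * (u + v + w))
      + (r ^ 2 - p ^ 2 - q ^ 2) * w + 2 * r * (p * u + q * v), ?_, ?_, ?_, ?_⟩ <;>
  · simp only [re_mul, imI_mul, imJ_mul, imK_mul, re_star, imI_star, imJ_star, imK_star,
      ha, hp, hq, hr, he, hu, hv, hw]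
    push_cast
    ring

theorem normSq_quatAct {γ : ℍ[ℝ]} (hγ : γ ≠ 0) (x : ℍ[ℝ]) : normSq (quatAct γ x) = normSq x := by
  have hγ' : normSq γ ≠ 0 := normSq_ne_zero.2 hγ
  rw [quatAct, normSq_smul, map_mul, map_mul, normSq_star]
  field_simp

theorem normSq_mul_pureInner_quatAct {γ : ℍ[ℝ]} (hγ : γ ≠ 0) (x : ℍ[ℝ]) (h : ℕ) :
    normSq γ * h * pureInner (quatAct γ x) x
      = pureInner (γ * (Real.sqrt h • x) * star γ) (Real.sqrt h • x) := by
  have hγ' : normSq γ ≠ 0 := normSq_ne_zero.2 hγ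
  simp only [pureInner, quatAct, smul_mul_assoc, mul_smul_comm, re_smul, smul_eq_mul]
  rw [← mul_assoc (Real.sqrt h), Real.mul_self_sqrt (Nat.cast_nonneg h)]
  field_simp

theorem abs_pureInner_lt_one {x y : ℍ[ℝ]} (hy : normSq y = 1) (hx : normSq x = 1)
    (hre : x.re = 0) (hne : y ≠ x) (hne' : y ≠ -x) : |pureInner y x| < 1 := by
  have hstar : star x = -x := by ext <;> simp [hre]
  have hsub : 0 < normSq (y - x) := normSq_nonneg.lt_of_ne' (normSq_ne_zero.2 (sub_ne_zero.2 hne))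
  have hadd : 0 < normSq (y + x) :=
    normSq_nonneg.lt_of_ne' (normSq_ne_zero.2 fun h ↦ hne' (eq_neg_of_add_eq_zero_left h))
  rw [sub_eq_add_neg, normSq_add, normSq_neg, star_neg, hstar, neg_neg] at hsub
  rw [normSq_add, hstar, mul_neg, re_neg] at hadd
  rw [pureInner, abs_lt]
  constructor <;> linarith

theorem abs_le_one_sub_inv_of_intCast_mul_eq {t : ℝ} {N : ℤ} (hN : 0 < N) (ht : |t| < 1)
    (hint : ∃ k : ℤ, N * t = k) : |t| ≤ 1 - 1 / N := by
  obtain ⟨k, hk⟩ := hint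
  have hNR : (0 : ℝ) < N := by exact_mod_cast hN
  have hkN : |k| < N := by
    have : |(k : ℝ)| < N := by
      rw [← hk, abs_mul, abs_of_pos hNR]; exact mul_lt_of_lt_one_right hNR ht
    exact_mod_cast this
  have hkN' : |(k : ℝ)| ≤ N - 1 := by exact_mod_cast Int.le_sub_one_of_lt hkN
  calc |t| = |(k : ℝ)| / N := by rw [← hk, abs_mul, abs_of_pos hNR, mul_div_cancel_left₀ _ hNR.ne']
    _ ≤ (N - 1) / N := by gcongr
    _ = 1 - 1 / N := by field_simp

namespace Real

theorem le_arccos_of_le_one_sub_sq_div_two {s t : ℝ} (hs₀ : 0 ≤ s) (hsπ : s ≤ π)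
    (ht : t ≤ 1 - s ^ 2 / 2) : s ≤ arccos t :=
  calc s = arccos (cos s) := (arccos_cos hs₀ hsπ).symm
    _ ≤ arccos t := arccos_le_arccos (ht.trans (one_sub_sq_div_two_le_cos (x := s)))

theorem arccos_le_pi_sub_of_neg_one_add_sq_div_two_le {s t : ℝ} (hs₀ : 0 ≤ s) (hsπ : s ≤ π)
    (ht : -1 + s ^ 2 / 2 ≤ t) : arccos t ≤ π - s := by
  have := le_arccos_of_le_one_sub_sq_div_two hs₀ hsπ (t := -t) (by linarith)
  rw [arccos_neg] at this
  linarith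

theorem one_div_sqrt_le_arccos_le_pi_sub {N t : ℝ} (hN : 1 ≤ N) (ht : |t| ≤ 1 - 1 / (2 * N)) :
    1 / √N ≤ arccos t ∧ arccos t ≤ π - 1 / √N := by
  have hs₀ : 0 ≤ 1 / √N := by positivity
  have hs1 : 1 / √N ≤ 1 := by
    rw [div_le_one (by positivity)]; exact one_le_sqrt.2 hN
  have hsπ : 1 / √N ≤ π := hs1.trans (by linarith [pi_gt_three])
  have hsq : (1 / √N) ^ 2 / 2 = 1 / (2 * N) := by
    rw [div_pow, sq_sqrt (by linarith)]; ring
  rw [abs_le] at ht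
  exact ⟨le_arccos_of_le_one_sub_sq_div_two hs₀ hsπ (by linarith),
    arccos_le_pi_sub_of_neg_one_add_sq_div_two_le hs₀ hsπ (by linarith)⟩

end Real

/-- If `x ∈ S²` has height `h(x)` and `γ` is a nonzero Hurwitz quaternion with
`γ·x ∉ {x,-x}`, then `1/√(n(γ)h(x)) ≤ d(γ·x, x) ≤ π - 1/√(n(γ)h(x))`. -/
theorem hurwitz_moves_point (x : ℍ[ℝ]) (hre : x.re = 0)
    (hnorm : Quaternion.normSq x = 1) (h : ℕ) (hh : HasHeight x h)
    (γ : ℍ[ℝ]) (hγ : IsHurwitz γ) (hγ0 : γ ≠ 0)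
    (h1 : quatAct γ x ≠ x) (h2 : quatAct γ x ≠ -x) :
    1 / Real.sqrt (Quaternion.normSq γ * h) ≤ sphDist (quatAct γ x) x ∧
      sphDist (quatAct γ x) x ≤ Real.pi - 1 / Real.sqrt (Quaternion.normSq γ * h) := by
  obtain ⟨n, hn⟩ := hγ.exists_normSq_eq
  obtain ⟨hh0, hX, -⟩ := hh
  have hXL := hX.isLipschitz_smul hre
  obtain ⟨k, hk⟩ := (hγ.isLipschitz_mul_mul_star hXL).exists_re_mul_eq hXL
  have hN : 0 < n * h := by
    have : (0 : ℝ) < n := hn ▸ normSq_nonneg.lt_of_ne' (normSq_ne_zero.2 hγ0)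
    exact mul_pos (by exact_mod_cast this) (by exact_mod_cast hh0)
  have hNR : (1 : ℝ) ≤ normSq γ * h := by rw [hn]; exact_mod_cast hN
  have hint : ∃ m : ℤ, ((n * h : ℤ) : ℝ) * pureInner (quatAct γ x) x = m :=
    ⟨-k, by push_cast; rw [← hn, normSq_mul_pureInner_quatAct hγ0, pureInner, hk]⟩
  have ht := abs_le_one_sub_inv_of_intCast_mul_eq hN
    (abs_pureInner_lt_one ((normSq_quatAct hγ0 x).trans hnorm) hnorm hre h1 h2) hint
  push_cast at ht
  rw [← hn] at ht
  have hweak : 1 / (2 * (normSq γ * h)) ≤ 1 / (normSq γ * h) :=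
    one_div_le_one_div_of_le (by positivity) (by linarith)
  exact Real.one_div_sqrt_le_arccos_le_pi_sub hNR (by linarith)
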